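/- arXiv:2601.12643 — 2 statements merged into one kernel-verified Lean document; each statement's English description precedes it below -/
import Mathlib

section
/- Let K be a field with char(K) ∤ d where d ≥ 2, and let ℓ₀ ≥ 2 be an integer with char(K) ∤ ℓ₀. Then the polynomial f₀(x) = -x^{dℓ₀} + (x^{ℓ₀} + 1)^d ∈ K[x] has degree ℓ₀(d-1) and has no repeated roots (is separable). -/
/-!
Write `f₀ = F₀ ∘ X^ℓ₀` with `F₀ = (X + 1)^d - X^d`, whose degree is `d - 1` because its
`X^(d-1)`-coefficient is `d`. Separability passes through the substitution `X ↦ X^ℓ₀`: the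
derivative of `F₀ ∘ X^ℓ₀` is `ℓ₀ X^(ℓ₀-1) · F₀' ∘ X^ℓ₀`, and `F₀(0) = 1` makes `F₀ ∘ X^ℓ₀` coprime
to `X`. Finally `F₀' = d G` with `G = (X + 1)^(d-1) - X^(d-1)`, and `F₀ - (X + 1) G = X^(d-1)` is
again coprime to `F₀`, so `F₀` and `F₀'` are coprime.
-/

open Polynomial

namespace Polynomial

theorem natDegree_X_add_one_pow_sub_X_pow {R : Type*} [Ring R] {n : ℕ} (hn : (n : R) ≠ 0) :
    ((X + 1) ^ n - X ^ n : R[X]).natDegree = n - 1 := by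
  obtain ⟨m, rfl⟩ := Nat.exists_eq_succ_of_ne_zero (n := n) (by rintro rfl; simp at hn)
  refine natDegree_eq_of_le_of_coeff_ne_zero ?_ ?_
  · rw [natDegree_le_iff_coeff_eq_zero]
    intro N hN
    rcases (show N = m + 1 ∨ m + 1 < N by omega) with rfl | hlt
    · simp [coeff_X_add_one_pow]
    · simp [coeff_X_add_one_pow, Nat.choose_eq_zero_of_lt hlt, coeff_X_pow, hlt.ne']
  · simpa [coeff_X_add_one_pow, coeff_X_pow] using hn

variable {R : Type*} [CommRing R]

theorem isCoprime_X_of_isUnit_coeff_zero {p : R[X]} (h : IsUnit (p.coeff 0)) :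
    IsCoprime p X := by
  obtain ⟨q, hq⟩ := X_dvd_sub_C (p := p)
  rw [sub_eq_iff_eq_add'.mp hq]
  exact (isCoprime_one_left.of_isCoprime_of_dvd_left (isUnit_C.mpr h).dvd).add_mul_left_left q

theorem Separable.comp_X_pow {F : R[X]} (hF : F.Separable) (h0 : IsUnit (F.coeff 0)) {n : ℕ}
    (hn : IsUnit (n : R)) : (F.comp (X ^ n)).Separable := by
  have hX : IsCoprime (F.comp (X ^ n)) (X ^ (n - 1)) := by
    rcases n with _ | n
    · exact isCoprime_one_right
    · refine (isCoprime_X_of_isUnit_coeff_zero ?_).pow_right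
      simpa [coeff_zero_eq_eval_zero, eval_comp] using h0
  rw [Separable, derivative_comp, derivative_X_pow, mul_assoc,
    isCoprime_mul_unit_left_right (isUnit_C.mpr hn)]
  exact hX.mul_right (IsCoprime.map hF (compRingHom (X ^ n)))

theorem separable_X_add_one_pow_sub_X_pow {n : ℕ} (hn : IsUnit (n : R)) :
    ((X + 1) ^ n - X ^ n : R[X]).Separable := by
  rcases n with _ | m
  · have : Subsingleton R := subsingleton_of_zero_eq_one (by simpa using hn)
    rw [Subsingleton.elim ((X + 1) ^ 0 - X ^ 0 : R[X]) 1]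
    exact separable_one
  set F : R[X] := (X + 1) ^ (m + 1) - X ^ (m + 1) with hF
  set G : R[X] := (X + 1) ^ m - X ^ m with hG
  have hFX : IsCoprime F (X ^ m) :=
    (isCoprime_X_of_isUnit_coeff_zero (by simp [hF, coeff_X_add_one_pow])).pow_right
  have hFG : IsCoprime F G := by
    refine IsCoprime.of_mul_right_right (y := X + 1) ?_
    rw [← IsCoprime.sub_mul_left_right_iff (z := 1), mul_one,
      show (X + 1) * G - F = -X ^ m by rw [hF, hG]; ring]
    exact hFX.neg_right
  have hF' : derivative F = C ((m + 1 : ℕ) : R) * G := by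
    simp only [hF, hG, derivative_sub, derivative_pow, derivative_add, derivative_X,
      derivative_one, Nat.add_sub_cancel, map_natCast]
    ring
  rwa [Separable, hF', isCoprime_mul_unit_left_right (isUnit_C.mpr hn)]

end Polynomial

theorem stmt_0_general (K : Type*) [Field K] (d ℓ₀ : ℕ)
    (hdK : (d : K) ≠ 0) (hℓK : (ℓ₀ : K) ≠ 0) :
    ((-X ^ (d * ℓ₀) + (X ^ ℓ₀ + 1) ^ d : K[X]).natDegree = ℓ₀ * (d - 1)) ∧
      (-X ^ (d * ℓ₀) + (X ^ ℓ₀ + 1) ^ d : K[X]).Separable := by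
  have hd0 : d ≠ 0 := by rintro rfl; simp at hdK
  have hcomp : (-X ^ (d * ℓ₀) + (X ^ ℓ₀ + 1) ^ d : K[X]) =
      ((X + 1) ^ d - X ^ d : K[X]).comp (X ^ ℓ₀) := by
    simp only [sub_comp, pow_comp, add_comp, X_comp, one_comp, pow_mul]
    ring
  rw [hcomp]
  refine ⟨?_, ?_⟩
  · rw [natDegree_comp, natDegree_X_add_one_pow_sub_X_pow hdK, natDegree_X_pow, mul_comm]
  · exact Separable.comp_X_pow (separable_X_add_one_pow_sub_X_pow hdK.isUnit)
      (by simp [coeff_X_add_one_pow, hd0.symm]) hℓK.isUnit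

theorem stmt_0 (K : Type*) [Field K] (d ℓ₀ : ℕ) (hd : 2 ≤ d) (hℓ : 2 ≤ ℓ₀)
    (hdK : (d : K) ≠ 0) (hℓK : (ℓ₀ : K) ≠ 0) :
    ((-X ^ (d * ℓ₀) + (X ^ ℓ₀ + 1) ^ d : K[X]).natDegree = ℓ₀ * (d - 1)) ∧
      (-X ^ (d * ℓ₀) + (X ^ ℓ₀ + 1) ^ d : K[X]).Separable :=
  stmt_0_general K d ℓ₀ hdK hℓK
end

section
/- Let K be an algebraically closed field of characteristic 0, let d ≥ 2 and ℓ₀ ≥ 2 be integers, and let f₁, f₂, f₃ ∈ K[x] be polynomials of degree ℓ₀ such that f₁^d, f₂^d, f₃^d are linearly independent over K and f₁^d + f₂^d + f₃^d = A for a nonzero constant A ∈ K. Then ℓ₀(d - 6) ≤ -3; in particular d ≤ 5. -/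
/-!
Write `Fᵢ = fᵢ ^ d`. Differentiating `F₁ + F₂ + F₃ = A` gives `F₁' + F₂' + F₃' = 0`, so the Wronskian
`W = W(F₂', F₃')` equals `W(F₁', F₂')` and `W(F₃', F₁')`. It is nonzero because `1, F₂, F₃` are
linearly independent. Since `fᵢ ^ (d - 1) ∣ Fᵢ'` and `fᵢ ^ (d - 2) ∣ Fᵢ''`, each `W(Fᵢ', Fⱼ')` is
divisible by `(fᵢ fⱼ) ^ (d - 2)`; as `A ≠ 0`, at most two of the `fᵢ` vanish at any point, and
choosing that pair at each root gives `(f₁ f₂ f₃) ^ (d - 2) ∣ W`. Comparing degrees,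
`3 ℓ₀ (d - 2) ≤ deg W < 2 (d ℓ₀ - 1)`, i.e. `ℓ₀ (d - 6) ≤ -3`.
-/

open Polynomial

namespace Polynomial

variable {R : Type*}

lemma natDegree_derivative_pow_le [Semiring R] (p : R[X]) (n : ℕ) :
    (derivative (p ^ n)).natDegree ≤ n * p.natDegree - 1 :=
  (natDegree_derivative_le _).trans (Nat.sub_le_sub_right natDegree_pow_le 1)

section CommSemiring

variable [CommSemiring R]

lemma pow_succ_dvd_derivative_pow (p : R[X]) (n : ℕ) :
    p ^ (n + 1) ∣ derivative (p ^ (n + 2)) :=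
  ⟨C ((n + 2 : ℕ) : R) * derivative p, by rw [derivative_pow]; push_cast; ring⟩

lemma pow_dvd_derivative_derivative_pow (p : R[X]) (n : ℕ) :
    p ^ n ∣ derivative (derivative (p ^ (n + 2))) := by
  refine ⟨C ((n + 2 : ℕ) : R) * (C ((n + 1 : ℕ) : R) * derivative p ^ 2
      + p * derivative (derivative p)), ?_⟩
  simp only [derivative_pow, derivative_mul, derivative_C]
  push_cast
  ring

end CommSemiring

section CommRing

variable [CommRing R]

lemma wronskian_mul_mul (g a b : R[X]) :
    wronskian (g * a) (g * b) = g ^ 2 * wronskian a b := by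
  simp only [wronskian, derivative_mul]
  ring

lemma mul_pow_dvd_wronskian_derivative_pow (p q : R[X]) (n : ℕ) :
    (p * q) ^ n ∣ wronskian (derivative (p ^ (n + 2))) (derivative (q ^ (n + 2))) := by
  rw [wronskian, mul_pow]
  apply dvd_sub
  · exact mul_dvd_mul ((pow_dvd_pow p n.le_succ).trans (pow_succ_dvd_derivative_pow p n))
      (pow_dvd_derivative_derivative_pow q n)
  · exact mul_dvd_mul (pow_dvd_derivative_derivative_pow p n)
      ((pow_dvd_pow q n.le_succ).trans (pow_succ_dvd_derivative_pow q n))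

lemma pow_rootMultiplicity_dvd_wronskian_derivative_pow (p q : R[X]) (a : R) (n : ℕ) :
    (X - C a) ^ (n * (p.rootMultiplicity a + q.rootMultiplicity a)) ∣
      wronskian (derivative (p ^ (n + 2))) (derivative (q ^ (n + 2))) := by
  rw [mul_comm, pow_mul, pow_add]
  exact (pow_dvd_pow_of_dvd (mul_dvd_mul (pow_rootMultiplicity_dvd p a)
    (pow_rootMultiplicity_dvd q a)) n).trans (mul_pow_dvd_wronskian_derivative_pow p q n)

end CommRing

section Field

variable {K : Type*} [Field K]

lemma exists_eq_C_mul_of_wronskian_eq_zero [CharZero K] {a b : K[X]} (ha : a ≠ 0)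
    (hw : wronskian a b = 0) : ∃ c, b = C c * a := by
  classical
  obtain ⟨a₀, b₀, ha₀, hb₀, hunit⟩ := extract_gcd a b
  generalize gcd a b = g at ha₀ hb₀
  subst ha₀ hb₀
  have hg : g ≠ 0 := left_ne_zero_of_mul ha
  have hco : IsCoprime a₀ b₀ := isRelPrime_iff_isCoprime.mp (gcd_isUnit_iff_isRelPrime.mp hunit)
  rw [wronskian_mul_mul, mul_eq_zero, or_iff_right (pow_ne_zero 2 hg),
    hco.wronskian_eq_zero_iff] at hw
  rw [eq_C_of_derivative_eq_zero hw.1] at ha ⊢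
  rw [eq_C_of_derivative_eq_zero hw.2]
  refine ⟨b₀.coeff 0 / a₀.coeff 0, ?_⟩
  have : a₀.coeff 0 ≠ 0 := fun h ↦ ha (by rw [h, C_0, mul_zero])
  rw [mul_left_comm, ← C_mul, div_mul_cancel₀ _ this]

lemma wronskian_derivative_ne_zero [CharZero K] {F G : K[X]}
    (h : LinearIndependent K ![1, F, G]) : wronskian (derivative F) (derivative G) ≠ 0 := by
  intro hw
  rw [Fintype.linearIndependent_iff] at h
  simp only [Fin.sum_univ_three, Matrix.cons_val_zero, Matrix.cons_val_one, Matrix.cons_val_two,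
    Matrix.head_cons, Matrix.tail_cons, smul_eq_C_mul, mul_one] at h
  by_cases hF : derivative F = 0
  · have hrel := h ![-F.coeff 0, 1, 0]
    simp only [Matrix.cons_val_zero, Matrix.cons_val_one, Matrix.cons_val_two, Matrix.head_cons,
      Matrix.tail_cons] at hrel
    refine one_ne_zero (hrel ?_ 1)
    rw [map_neg, C_1, C_0]
    linear_combination eq_C_of_derivative_eq_zero hF
  · obtain ⟨c, hc⟩ := exists_eq_C_mul_of_wronskian_eq_zero hF hw
    have hrel := h ![-(G - C c * F).coeff 0, -c, 1]
    simp only [Matrix.cons_val_zero, Matrix.cons_val_one, Matrix.cons_val_two, Matrix.head_cons,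
      Matrix.tail_cons] at hrel
    refine one_ne_zero (hrel ?_ 2)
    rw [map_neg, ← eq_C_of_derivative_eq_zero (by simp [hc])]
    simp only [map_neg, map_one]
    ring

lemma mul_mul_pow_dvd_wronskian_of_add_add_eq_C [IsAlgClosed K] {n : ℕ}
    {f₁ f₂ f₃ : K[X]} {A : K} (hA : A ≠ 0)
    (hsum : f₁ ^ (n + 2) + f₂ ^ (n + 2) + f₃ ^ (n + 2) = C A) (hf : f₁ * f₂ * f₃ ≠ 0)
    (hW : wronskian (derivative (f₂ ^ (n + 2))) (derivative (f₃ ^ (n + 2))) ≠ 0) :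
    (f₁ * f₂ * f₃) ^ n ∣ wronskian (derivative (f₂ ^ (n + 2))) (derivative (f₃ ^ (n + 2))) := by
  classical
  have hD : derivative (f₁ ^ (n + 2)) + derivative (f₂ ^ (n + 2)) +
      derivative (f₃ ^ (n + 2)) = 0 := by
    simpa using congrArg derivative hsum
  have hW₁₂ := wronskian_eq_of_sum_zero hD
  have hW₃₁ := wronskian_eq_of_sum_zero (by linear_combination hD :
    derivative (f₂ ^ (n + 2)) + derivative (f₃ ^ (n + 2)) + derivative (f₁ ^ (n + 2)) = 0)
  rw [(IsAlgClosed.splits _).dvd_iff_roots_le_roots (pow_ne_zero _ hf) hW, Multiset.le_iff_count]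
  intro a
  rw [roots_pow, Multiset.count_nsmul, roots_mul hf, roots_mul (left_ne_zero_of_mul hf),
    Multiset.count_add, Multiset.count_add, count_roots, count_roots, count_roots, count_roots,
    le_rootMultiplicity_iff hW]
  have hroot : ¬f₁.IsRoot a ∨ ¬f₂.IsRoot a ∨ ¬f₃.IsRoot a := by
    by_contra! h
    simpa [h.1.eq_zero, h.2.1.eq_zero, h.2.2.eq_zero, eq_comm, hA] using
      congrArg (eval a) hsum
  rcases hroot with h | h | h <;> rw [rootMultiplicity_eq_zero h]
  · rw [zero_add]
    exact pow_rootMultiplicity_dvd_wronskian_derivative_pow f₂ f₃ a n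
  · rw [add_zero, add_comm, hW₃₁]
    exact pow_rootMultiplicity_dvd_wronskian_derivative_pow f₃ f₁ a n
  · rw [add_zero, ← hW₁₂]
    exact pow_rootMultiplicity_dvd_wronskian_derivative_pow f₁ f₂ a n

end Field

end Polynomial

lemma LinearIndependent.one_of_add_add_eq_C {K : Type*} [Field K] {F₁ F₂ F₃ : K[X]} {A : K}
    (h : LinearIndependent K ![F₁, F₂, F₃]) (hsum : F₁ + F₂ + F₃ = C A) (hA : A ≠ 0) :
    LinearIndependent K ![1, F₂, F₃] := by
  rw [Fintype.linearIndependent_iff] at h ⊢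
  intro g hg
  simp only [Fin.sum_univ_three, Matrix.cons_val_zero, Matrix.cons_val_one, Matrix.cons_val_two,
    Matrix.head_cons, Matrix.tail_cons, smul_eq_C_mul, mul_one] at h hg
  have hrel := h ![g 0 / A, g 0 / A + g 1, g 0 / A + g 2]
  simp only [Matrix.cons_val_zero, Matrix.cons_val_one, Matrix.cons_val_two, Matrix.head_cons,
    Matrix.tail_cons] at hrel
  have hC : C (g 0 / A) * C A = C (g 0) := by rw [← C_mul, div_mul_cancel₀ _ hA]
  specialize hrel (by rw [map_add, map_add]; linear_combination hg + C (g 0 / A) * hsum + hC)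
  have h0 : g 0 = 0 := by simpa [hA] using hrel 0
  intro i
  fin_cases i
  · exact h0
  · simpa [h0] using hrel 1
  · simpa [h0] using hrel 2

theorem stmt_5 (K : Type*) [Field K] [IsAlgClosed K] [CharZero K]
    (d ℓ₀ : ℕ) (hd : 2 ≤ d) (hℓ : 2 ≤ ℓ₀)
    (f₁ f₂ f₃ : K[X])
    (h1 : f₁.natDegree = ℓ₀) (h2 : f₂.natDegree = ℓ₀) (h3 : f₃.natDegree = ℓ₀)
    (hli : LinearIndependent K ![f₁ ^ d, f₂ ^ d, f₃ ^ d])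
    (A : K) (hA : A ≠ 0) (hsum : f₁ ^ d + f₂ ^ d + f₃ ^ d = C A) :
    (ℓ₀ : ℤ) * ((d : ℤ) - 6) ≤ -3 ∧ d ≤ 5 := by
  obtain ⟨n, rfl⟩ : ∃ n, d = n + 2 := ⟨d - 2, by omega⟩
  have hne : ∀ f : K[X], f.natDegree = ℓ₀ → f ≠ 0 := by
    rintro f hf rfl
    rw [natDegree_zero] at hf
    omega
  have hf : f₁ * f₂ * f₃ ≠ 0 := mul_ne_zero (mul_ne_zero (hne f₁ h1) (hne f₂ h2)) (hne f₃ h3)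
  have hW := wronskian_derivative_ne_zero (hli.one_of_add_add_eq_C hsum hA)
  have hdeg_le := natDegree_le_of_dvd (mul_mul_pow_dvd_wronskian_of_add_add_eq_C hA hsum hf hW) hW
  have hdeg_lt := (natDegree_wronskian_lt_add hW).trans_le (add_le_add
    (natDegree_derivative_pow_le f₂ (n + 2)) (natDegree_derivative_pow_le f₃ (n + 2)))
  rw [natDegree_pow, natDegree_mul (left_ne_zero_of_mul hf) (hne f₃ h3),
    natDegree_mul (hne f₁ h1) (hne f₂ h2), h1, h2, h3] at hdeg_le
  rw [h2, h3] at hdeg_lt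
  have hpos : 1 ≤ (n + 2) * ℓ₀ := by nlinarith
  zify [hpos] at hdeg_le hdeg_lt
  constructor
  · push_cast
    nlinarith
  · by_contra!
    nlinarith
end
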